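/- Negative cycle detection, completeness. For the Bellman–Ford iterates d from source s: if there exists a cycle reachable from s whose total weight is negative, then there exists a vertex v with d |V| v < d (|V|−1) v; equivalently, if the iterates are unchanged from step |V| − 1 to step |V|, then no negative-weight cycle is reachable from s. -/

import Mathlib

/-- `IsWalk E p t a b` : `p 0 = a`, `p t = b`, and each consecutive pair is an edge. -/
def IsWalk {V : Type*} (E : V → V → Prop) (p : ℕ → V) (t : ℕ) (a b : V) : Prop :=
  p 0 = a ∧ p t = b ∧ ∀ i < t, E (p i) (p (i + 1))

/-- Weight of a walk with `t` edges. -/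
def walkWeight {V : Type*} (w : V → V → ℝ) (p : ℕ → V) (t : ℕ) : ℝ :=
  ∑ i ∈ Finset.range t, w (p i) (p (i + 1))

open Classical in
/-- Bellman–Ford iterates from source `s`. -/
noncomputable def BF {V : Type*} (E : V → V → Prop) (w : V → V → ℝ) (s : V) :
    ℕ → V → EReal
  | 0, v => if v = s then 0 else ⊤
  | (t + 1), v =>
      min (BF E w s t v) (⨅ u : {u : V // E u v}, (BF E w s t u.1 + (w u.1 v : EReal)))

/-!
If step `|V|` improves no value, the iterates have reached a fixed point of relaxation: they
stay put from then on, and they satisfy `d v ≤ d u + w u v` along every edge. Reachability of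
the cycle's base `c` makes `d c` finite (it is at most the weight of a walk from `s`), and
summing the edge inequality around the cycle gives `d c ≤ d c + w(cycle)`, so the cycle
weight is nonnegative. Finiteness of `V` keeps every iterate above `⊥`, since each is built
from finite infima of values above `⊥`.
-/

section

variable {V : Type*} {E : V → V → Prop} {w : V → V → ℝ}

lemma IsWalk.of_succ {p : ℕ → V} {t : ℕ} {a b : V} (hp : IsWalk E p (t + 1) a b) :
    IsWalk E p t a (p t) ∧ E (p t) b :=
  ⟨⟨hp.1, rfl, fun i hi => hp.2.2 i (hi.trans t.lt_succ_self)⟩,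
    hp.2.1 ▸ hp.2.2 t t.lt_succ_self⟩

lemma walkWeight_succ (p : ℕ → V) (t : ℕ) :
    walkWeight w p (t + 1) = walkWeight w p t + w (p t) (p (t + 1)) :=
  Finset.sum_range_succ _ _

lemma le_add_walkWeight_of_forall_edge {d : V → EReal}
    (hd : ∀ u v, E u v → d v ≤ d u + w u v) {p : ℕ → V} {t : ℕ} {a b : V}
    (hp : IsWalk E p t a b) : d b ≤ d a + walkWeight w p t := by
  induction t generalizing b with
  | zero => simp [← hp.1, ← hp.2.1, walkWeight]
  | succ t ih =>
    obtain ⟨hprefix, hlast⟩ := hp.of_succ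
    calc d b ≤ d (p t) + w (p t) b := hd _ _ hlast
      _ ≤ d a + walkWeight w p t + w (p t) b := by gcongr; exact ih hprefix
      _ = d a + walkWeight w p (t + 1) := by
        rw [walkWeight_succ, hp.2.1, EReal.coe_add, add_assoc]

lemma walkWeight_nonneg_of_forall_edge {d : V → EReal}
    (hd : ∀ u v, E u v → d v ≤ d u + w u v) {p : ℕ → V} {l : ℕ} {c : V}
    (hp : IsWalk E p l c c) (hc_top : d c ≠ ⊤) (hc_bot : d c ≠ ⊥) :
    0 ≤ walkWeight w p l := by
  have hcycle := le_add_walkWeight_of_forall_edge hd hp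
  rw [← EReal.coe_toReal hc_top hc_bot] at hcycle
  norm_cast at hcycle
  linarith

variable {s : V}

lemma BF_succ_le_self (t : ℕ) (v : V) : BF E w s (t + 1) v ≤ BF E w s t v :=
  min_le_left _ _

lemma BF_succ_le_add_of_edge (t : ℕ) {u v : V} (huv : E u v) :
    BF E w s (t + 1) v ≤ BF E w s t u + w u v :=
  (min_le_right _ _).trans (iInf_le (fun x : {x // E x v} => BF E w s t x.1 + w x.1 v) ⟨u, huv⟩)

lemma BF_antitone : Antitone (BF E w s) :=
  antitone_nat_of_succ_le fun t v => BF_succ_le_self t v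

lemma BF_succ_congr {t t' : ℕ} (h : BF E w s t = BF E w s t') :
    BF E w s (t + 1) = BF E w s (t' + 1) := by
  funext v
  show min _ _ = min _ _
  rw [h]

lemma BF_le_of_succ_eq {n : ℕ} (hfix : BF E w s (n + 1) = BF E w s n) (t : ℕ) :
    BF E w s n ≤ BF E w s t := by
  rcases le_total t n with htn | hnt
  · exact BF_antitone htn
  · refine le_of_eq ?_
    induction t, hnt using Nat.le_induction with
    | base => rfl
    | succ k _ hk => rw [BF_succ_congr hk.symm, hfix]

lemma BF_le_add_of_succ_eq {n : ℕ} (hfix : BF E w s (n + 1) = BF E w s n) {u v : V}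
    (huv : E u v) : BF E w s n v ≤ BF E w s n u + w u v :=
  (congrFun hfix v).ge.trans (BF_succ_le_add_of_edge n huv)

lemma BF_le_walkWeight {p : ℕ → V} {t : ℕ} {v : V} (hp : IsWalk E p t s v) :
    BF E w s t v ≤ walkWeight w p t := by
  induction t generalizing v with
  | zero => simp [BF, ← hp.1, ← hp.2.1, walkWeight]
  | succ t ih =>
    obtain ⟨hprefix, hlast⟩ := hp.of_succ
    calc BF E w s (t + 1) v ≤ BF E w s t (p t) + w (p t) v := BF_succ_le_add_of_edge t hlast
      _ ≤ walkWeight w p t + w (p t) v := by gcongr; exact ih hprefix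
      _ = walkWeight w p (t + 1) := by rw [walkWeight_succ, hp.2.1, EReal.coe_add]

lemma BF_ne_bot [Finite V] (t : ℕ) (v : V) : BF E w s t v ≠ ⊥ := by
  induction t generalizing v with
  | zero => unfold BF; split <;> simp
  | succ t ih =>
    have hrelax_ne_bot : ⨅ u : {u // E u v}, (BF E w s t u.1 + w u.1 v) ≠ ⊥ := by
      rcases isEmpty_or_nonempty {u // E u v} with _ | _
      · simp [iInf_of_empty]
      · obtain ⟨u, hu⟩ := exists_eq_ciInf_of_finite
          (f := fun u : {u // E u v} => BF E w s t u.1 + w u.1 v)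
        rw [← hu]
        exact EReal.add_ne_bot_iff.mpr ⟨ih u.1, EReal.coe_ne_bot _⟩
    show min _ _ ≠ ⊥
    simp only [ne_eq, min_eq_bot, not_or]
    exact ⟨ih v, hrelax_ne_bot⟩

end

theorem bellmanFord_negCycle_complete_general
    {V : Type*} [Fintype V]
    (E : V → V → Prop) (w : V → V → ℝ) (s : V)
    (hcyc : ∃ (c : V) (p : ℕ → V) (l : ℕ), 1 ≤ l ∧ IsWalk E p l c c ∧
      (∃ (q : ℕ → V) (lq : ℕ), IsWalk E q lq s c) ∧ walkWeight w p l < 0) :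
    ∃ v : V, BF E w s (Fintype.card V) v < BF E w s (Fintype.card V - 1) v := by
  obtain ⟨c, p, l, -, hp, ⟨q, lq, hq⟩, hneg⟩ := hcyc
  by_contra! hstable
  set n := Fintype.card V - 1
  have hcard : Fintype.card V = n + 1 :=
    (Nat.sub_add_cancel (Fintype.card_pos_iff.mpr ⟨c⟩)).symm
  have hfix : BF E w s (n + 1) = BF E w s n :=
    funext fun v => le_antisymm (BF_succ_le_self n v) (hcard ▸ hstable v)
  have hc_top : BF E w s n c ≠ ⊤ := ne_top_of_le_ne_top (EReal.coe_ne_top _)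
    ((BF_le_of_succ_eq hfix lq c).trans (BF_le_walkWeight hq))
  have hpotential : ∀ u v, E u v → BF E w s n v ≤ BF E w s n u + w u v :=
    fun _ _ => BF_le_add_of_succ_eq hfix
  exact hneg.not_ge (walkWeight_nonneg_of_forall_edge hpotential hp hc_top (BF_ne_bot n c))

/-- Negative cycle detection, completeness: a negative-weight cycle reachable
from `s` forces a strict improvement at step `|V|`. -/
theorem bellmanFord_negCycle_complete
    {V : Type*} [Fintype V] [Nonempty V]
    (E : V → V → Prop) (w : V → V → ℝ) (s : V)
    (hcyc : ∃ (c : V) (p : ℕ → V) (l : ℕ), 1 ≤ l ∧ IsWalk E p l c c ∧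
      (∃ (q : ℕ → V) (lq : ℕ), IsWalk E q lq s c) ∧ walkWeight w p l < 0) :
    ∃ v : V, BF E w s (Fintype.card V) v < BF E w s (Fintype.card V - 1) v :=
  bellmanFord_negCycle_complete_general E w s hcyc
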